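/- arXiv:1709.05400 — 6 statements merged into one kernel-verified Lean document; each statement's English description precedes it below -/
import Mathlib

section
/- Let φ : [0,∞) → [0,∞) be a nonincreasing function and suppose there exist constants d > 0, α > 0, β > 1 and k₀ ≥ 0 such that φ(h) ≤ d·(h−k)^{−α}·φ(k)^{β} for all h > k ≥ k₀. Then φ(k₀ + T) = 0, where T > 0 is defined by T^{α} = d·2^{αβ/(β−1)}·φ(k₀)^{β−1}. -/
/-!
Along the levels `kₙ = k₀ + T - T / 2ⁿ`, whose gaps are `T / 2ⁿ⁺¹`, the hypothesis gives the
recursion `φ(kₙ₊₁) ≤ C Bⁿ φ(kₙ)^β` with `B = 2^α`, `C = d T^(-α) 2^α`. For `ρ = 2^(-α/(β-1))` one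
has `B ρ^(β-1) = 1`, and the value of `T` is exactly what makes `C φ(k₀)^(β-1) = ρ`; by induction
`φ(kₙ) ≤ φ(k₀) ρⁿ`. Since `k₀ + T` lies above every `kₙ₊₁`, the same estimate bounds
`φ(k₀ + T)` by `φ(k₀) ρⁿ⁺¹` for all `n`, hence by `0`.
-/

open Filter Topology

section GeometricDecay

variable {C B ρ β a₀ : ℝ}

theorem le_mul_pow_succ_of_le_mul_pow_mul_rpow {x y : ℝ} {n : ℕ}
    (hC : 0 ≤ C) (hB : 0 ≤ B) (hρ : 0 ≤ ρ) (hβ : 0 < β) (ha₀ : 0 ≤ a₀) (hy₀ : 0 ≤ y)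
    (hBρ : B * ρ ^ (β - 1) ≤ 1) (hCa₀ : C * a₀ ^ (β - 1) ≤ ρ)
    (hx : x ≤ C * B ^ n * y ^ β) (hy : y ≤ a₀ * ρ ^ n) :
    x ≤ a₀ * ρ ^ (n + 1) := by
  have rpow_split : ∀ z : ℝ, 0 ≤ z → z ^ β = z ^ (β - 1) * z := fun z hz => by
    simpa using Real.rpow_add' hz (by simpa using hβ.ne' : β - 1 + 1 ≠ 0)
  calc x ≤ C * B ^ n * (a₀ * ρ ^ n) ^ β := by grw [hx, hy]
    _ = C * a₀ ^ (β - 1) * a₀ * (B * ρ ^ (β - 1)) ^ n * ρ ^ n := by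
        rw [Real.mul_rpow ha₀ (by positivity), ← Real.rpow_pow_comm hρ, rpow_split _ ha₀,
          rpow_split _ hρ]
        ring
    _ ≤ ρ * a₀ * 1 ^ n * ρ ^ n := by gcongr
    _ = a₀ * ρ ^ (n + 1) := by ring

theorem le_mul_pow_of_succ_le_mul_pow_mul_rpow {a : ℕ → ℝ}
    (hC : 0 ≤ C) (hB : 0 ≤ B) (hρ : 0 ≤ ρ) (hβ : 0 < β) (ha : ∀ n, 0 ≤ a n)
    (hBρ : B * ρ ^ (β - 1) ≤ 1) (hCa : C * a 0 ^ (β - 1) ≤ ρ)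
    (hstep : ∀ n, a (n + 1) ≤ C * B ^ n * a n ^ β) (n : ℕ) :
    a n ≤ a 0 * ρ ^ n := by
  induction n with
  | zero => simp
  | succ n ih =>
    exact le_mul_pow_succ_of_le_mul_pow_mul_rpow hC hB hρ hβ (ha 0) (ha n) hBρ hCa (hstep n) ih

end GeometricDecay

theorem le_zero_of_forall_le_mul_pow {x a ρ : ℝ} (hρ₀ : 0 ≤ ρ) (hρ₁ : ρ < 1)
    (hx : ∀ n : ℕ, x ≤ a * ρ ^ n) : x ≤ 0 := by
  have hlim : Tendsto (fun n : ℕ => a * ρ ^ n) atTop (𝓝 0) := by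
    simpa using (tendsto_pow_atTop_nhds_zero_of_lt_one hρ₀ hρ₁).const_mul a
  exact ge_of_tendsto' hlim hx

theorem rpow_neg_div_two_pow_succ {T : ℝ} (hT : 0 ≤ T) (α : ℝ) (n : ℕ) :
    (T / 2 ^ (n + 1)) ^ (-α) = T ^ (-α) * 2 ^ α * (2 ^ α) ^ n := by
  rw [Real.div_rpow hT (by positivity), ← Real.rpow_pow_comm zero_le_two,
    Real.rpow_neg zero_le_two, inv_pow, div_inv_eq_mul, pow_succ]
  ring

noncomputable def stampacchiaLevel (k₀ T : ℝ) (n : ℕ) : ℝ := k₀ + T - T / 2 ^ n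

section stampacchiaLevel

variable {k₀ T : ℝ}

@[simp] theorem stampacchiaLevel_zero : stampacchiaLevel k₀ T 0 = k₀ := by
  simp [stampacchiaLevel]

theorem le_stampacchiaLevel (hT : 0 ≤ T) (n : ℕ) : k₀ ≤ stampacchiaLevel k₀ T n := by
  have : T / 2 ^ n ≤ T := div_le_self hT (one_le_pow₀ one_le_two)
  unfold stampacchiaLevel; linarith

theorem stampacchiaLevel_le_add (hT : 0 ≤ T) (n : ℕ) : stampacchiaLevel k₀ T n ≤ k₀ + T := by
  have : 0 ≤ T / 2 ^ n := by positivity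
  unfold stampacchiaLevel; linarith

theorem stampacchiaLevel_succ_sub (n : ℕ) :
    stampacchiaLevel k₀ T (n + 1) - stampacchiaLevel k₀ T n = T / 2 ^ (n + 1) := by
  unfold stampacchiaLevel; rw [pow_succ]; ring

end stampacchiaLevel

theorem le_mul_rpow_of_stampacchiaLevel_succ_le {φ : ℝ → ℝ} {d α β k₀ T h : ℝ}
    (hiter : ∀ h k : ℝ, k₀ ≤ k → k < h → φ h ≤ d * (h - k) ^ (-α) * (φ k) ^ β)
    (hd : 0 ≤ d) (hα : 0 ≤ α) (hT : 0 < T) {n : ℕ}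
    (hφ : 0 ≤ φ (stampacchiaLevel k₀ T n)) (hh : stampacchiaLevel k₀ T (n + 1) ≤ h) :
    φ h ≤ d * T ^ (-α) * 2 ^ α * (2 ^ α) ^ n * φ (stampacchiaLevel k₀ T n) ^ β := by
  have hgap : T / 2 ^ (n + 1) ≤ h - stampacchiaLevel k₀ T n := by
    linarith [stampacchiaLevel_succ_sub (k₀ := k₀) (T := T) n]
  have hgap_pos : 0 < T / 2 ^ (n + 1) := by positivity
  calc φ h ≤ d * (h - stampacchiaLevel k₀ T n) ^ (-α) * φ (stampacchiaLevel k₀ T n) ^ β :=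
        hiter _ _ (le_stampacchiaLevel hT.le n) (by linarith)
    _ ≤ d * (T / 2 ^ (n + 1)) ^ (-α) * φ (stampacchiaLevel k₀ T n) ^ β := by
        gcongr d * ?_ * _
        exact Real.rpow_le_rpow_of_nonpos hgap_pos hgap (neg_nonpos.mpr hα)
    _ = _ := by rw [rpow_neg_div_two_pow_succ hT.le]; ring

theorem stampacchia_constant_eq {d α β T P : ℝ} (hβ : 1 < β) (hT : 0 < T)
    (hTdef : T ^ α = d * (2 : ℝ) ^ (α * β / (β - 1)) * P ^ (β - 1)) :
    d * T ^ (-α) * 2 ^ α * P ^ (β - 1) = 2 ^ (-(α / (β - 1))) := by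
  have h2 : (2 : ℝ) ^ (α * β / (β - 1)) * 2 ^ (-(α / (β - 1))) = 2 ^ α := by
    rw [← Real.rpow_add two_pos]
    congr 1
    field_simp [(by linarith : β - 1 ≠ 0)]
    ring
  calc d * T ^ (-α) * 2 ^ α * P ^ (β - 1)
      = T ^ (-α) * (d * 2 ^ (α * β / (β - 1)) * P ^ (β - 1)) * 2 ^ (-(α / (β - 1))) := by
        rw [← h2]; ring
    _ = 2 ^ (-(α / (β - 1))) := by
        rw [← hTdef, Real.rpow_neg hT.le, inv_mul_cancel₀ (by positivity), one_mul]

theorem stampacchia_general (φ : ℝ → ℝ)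
    (hφ_nonneg : ∀ x, 0 ≤ x → 0 ≤ φ x)
    (d α β k₀ T : ℝ) (hd : 0 < d) (hα : 0 < α) (hβ : 1 < β) (hk₀ : 0 ≤ k₀)
    (hiter : ∀ h k : ℝ, k₀ ≤ k → k < h → φ h ≤ d * (h - k) ^ (-α) * (φ k) ^ β)
    (hT : 0 < T)
    (hTdef : T ^ α = d * (2 : ℝ) ^ (α * β / (β - 1)) * (φ k₀) ^ (β - 1)) :
    φ (k₀ + T) = 0 := by
  set ρ : ℝ := 2 ^ (-(α / (β - 1)))
  have hβ₁ : 0 < β - 1 := by linarith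
  have hρ₁ : ρ < 1 := Real.rpow_lt_one_of_one_lt_of_neg one_lt_two (by simp; positivity)
  have hBρ : (2 : ℝ) ^ α * ρ ^ (β - 1) ≤ 1 := by
    rw [← Real.rpow_mul zero_le_two, ← Real.rpow_add two_pos, neg_mul,
      div_mul_cancel₀ _ hβ₁.ne', add_neg_cancel, Real.rpow_zero]
  have hCa := stampacchia_constant_eq hβ hT hTdef
  have hφ : ∀ n, 0 ≤ φ (stampacchiaLevel k₀ T n) := fun n =>
    hφ_nonneg _ (hk₀.trans (le_stampacchiaLevel hT.le n))
  have hstep n {h} := le_mul_rpow_of_stampacchiaLevel_succ_le (h := h) hiter hd.le hα.le hT (hφ n)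
  have hdecay : ∀ n, φ (stampacchiaLevel k₀ T n) ≤ φ k₀ * ρ ^ n := by
    simpa using le_mul_pow_of_succ_le_mul_pow_mul_rpow (by positivity) (by positivity)
      (by positivity) (by positivity) hφ hBρ (by simpa using hCa.le) (fun n => hstep n le_rfl)
  refine le_antisymm (le_zero_of_forall_le_mul_pow (a := φ k₀ * ρ) (by positivity) hρ₁ fun n => ?_)
    (hφ_nonneg _ (by positivity))
  calc φ (k₀ + T) ≤ φ k₀ * ρ ^ (n + 1) :=
        le_mul_pow_succ_of_le_mul_pow_mul_rpow (by positivity) (by positivity) (by positivity)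
          (by positivity) (hφ_nonneg _ hk₀) (hφ n) hBρ hCa.le
          (hstep n (stampacchiaLevel_le_add hT.le _)) (hdecay n)
    _ = φ k₀ * ρ * ρ ^ n := by ring

/-- Stampacchia's iteration lemma: if `φ : [0,∞) → [0,∞)` is nonincreasing and satisfies
`φ(h) ≤ d (h-k)^(-α) φ(k)^β` for all `h > k ≥ k₀`, then `φ(k₀ + T) = 0` where
`T^α = d · 2^(αβ/(β-1)) · φ(k₀)^(β-1)`. -/
theorem stampacchia (φ : ℝ → ℝ)
    (hφ_nonneg : ∀ x, 0 ≤ x → 0 ≤ φ x)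
    (hφ_mono : ∀ x y, 0 ≤ x → x ≤ y → φ y ≤ φ x)
    (d α β k₀ T : ℝ) (hd : 0 < d) (hα : 0 < α) (hβ : 1 < β) (hk₀ : 0 ≤ k₀)
    (hiter : ∀ h k : ℝ, k₀ ≤ k → k < h → φ h ≤ d * (h - k) ^ (-α) * (φ k) ^ β)
    (hT : 0 < T)
    (hTdef : T ^ α = d * (2 : ℝ) ^ (α * β / (β - 1)) * (φ k₀) ^ (β - 1)) :
    φ (k₀ + T) = 0 :=
  stampacchia_general φ hφ_nonneg d α β k₀ T hd hα hβ hk₀ hiter hT hTdef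
end

section
/- Let p > 1, let u ≥ 0 and v > 0 be real numbers, and let a, b ∈ ℝ^N. Then ‖a‖^p − p·(u/v)^{p−1}·‖b‖^{p−2}⟨b, a⟩ + (p−1)·(u/v)^p·‖b‖^p ≥ 0, where the term ‖b‖^{p−2}⟨b, a⟩ is interpreted as 0 when b = 0. -/
open Real RealInnerProductSpace

/-- Pointwise (algebraic) form of Picone's inequality for the p-Laplacian:
for `p > 1`, `u ≥ 0`, `v > 0` and vectors `a, b ∈ ℝ^N`,
`‖a‖^p - p (u/v)^(p-1) ‖b‖^(p-2) ⟨b, a⟩ + (p-1) (u/v)^p ‖b‖^p ≥ 0`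
(the term `‖b‖^(p-2) ⟨b, a⟩` being `0` when `b = 0`, as given by `rpow`). -/
theorem picone_pointwise (N : ℕ) (p u v : ℝ) (hp : 1 < p) (hu : 0 ≤ u) (hv : 0 < v)
    (a b : EuclideanSpace ℝ (Fin N)) :
    0 ≤ ‖a‖ ^ p - p * (u / v) ^ (p - 1) * (‖b‖ ^ (p - 2) * ⟪b, a⟫)
        + (p - 1) * (u / v) ^ p * ‖b‖ ^ p := by
  set t : ℝ := u / v with ht
  have htn : 0 ≤ t := div_nonneg hu hv.le
  set X : ℝ := ‖a‖ with hX
  set c : ℝ := t * ‖b‖ with hc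
  have hXn : 0 ≤ X := norm_nonneg a
  have hcn : 0 ≤ c := mul_nonneg htn (norm_nonneg b)
  have hp0 : 0 < p := lt_trans one_pos hp
  have hp1 : 0 < p - 1 := by linarith
  -- step 1: bound middle term
  have hmid : t ^ (p - 1) * (‖b‖ ^ (p - 2) * ⟪b, a⟫) ≤ c ^ (p - 1) * X := by
    rcases eq_or_ne b 0 with hb | hb
    · simp [hb, hc, Real.mul_rpow htn (le_refl (0:ℝ)),
        Real.zero_rpow (show p - 1 ≠ 0 by linarith)]
    · have hbpos : (0:ℝ) < ‖b‖ := norm_pos_iff.mpr hb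
      have h1 : ‖b‖ ^ (p - 2) * ⟪b, a⟫ ≤ ‖b‖ ^ (p - 2) * (‖b‖ * X) := by
        apply mul_le_mul_of_nonneg_left _ (Real.rpow_nonneg (norm_nonneg b) _)
        exact real_inner_le_norm b a
      have h2 : ‖b‖ ^ (p - 2) * (‖b‖ * X) = ‖b‖ ^ (p - 1) * X := by
        rw [← mul_assoc, ← Real.rpow_add_one hbpos.ne' (p-2)]
        ring_nf
      have h3 : c ^ (p - 1) = t ^ (p - 1) * ‖b‖ ^ (p - 1) :=
        Real.mul_rpow htn (norm_nonneg b)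
      calc t ^ (p - 1) * (‖b‖ ^ (p - 2) * ⟪b, a⟫)
          ≤ t ^ (p - 1) * (‖b‖ ^ (p - 1) * X) := by
            apply mul_le_mul_of_nonneg_left _ (Real.rpow_nonneg htn _)
            rw [← h2]; exact h1
        _ = c ^ (p - 1) * X := by rw [h3]; ring
  -- step 2: Young's inequality
  have hpq : p.HolderConjugate (p / (p - 1)) := Real.HolderConjugate.conjExponent hp
  have hy : X * c ^ (p - 1) ≤ X ^ p / p + (c ^ (p - 1)) ^ (p / (p - 1)) / (p / (p - 1)) :=
    Real.young_inequality_of_nonneg hXn (Real.rpow_nonneg hcn _) hpq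
  have hcp : (c ^ (p - 1)) ^ (p / (p - 1)) = c ^ p := by
    rw [← Real.rpow_mul hcn]
    congr 1
    field_simp
  rw [hcp] at hy
  have hq : p / (p / (p - 1)) = p - 1 := by field_simp
  have hy2 : p * (c ^ (p - 1) * X) ≤ X ^ p + (p - 1) * c ^ p := by
    have := mul_le_mul_of_nonneg_left hy hp0.le
    calc p * (c ^ (p - 1) * X) = p * (X * c ^ (p - 1)) := by ring
      _ ≤ p * (X ^ p / p + c ^ p / (p / (p - 1))) := this
      _ = X ^ p + (p - 1) * c ^ p := by
          have h4 : p * (c ^ p / (p / (p - 1))) = c ^ p * (p / (p / (p - 1))) := by ring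
          rw [mul_add, mul_div_cancel₀ _ hp0.ne', h4, hq]; ring
  -- step 3: last term
  have hlast : t ^ p * ‖b‖ ^ p = c ^ p := (Real.mul_rpow htn (norm_nonneg b)).symm
  have hmid2 : p * t ^ (p - 1) * (‖b‖ ^ (p - 2) * ⟪b, a⟫) ≤ p * (c ^ (p - 1) * X) := by
    rw [mul_assoc]
    exact mul_le_mul_of_nonneg_left hmid hp0.le
  have : (p - 1) * t ^ p * ‖b‖ ^ p = (p - 1) * c ^ p := by rw [mul_assoc, hlast]
  rw [this]
  nlinarith [hy2, hmid2]
end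

section
/- Let p ≥ 2. For all vectors a, b ∈ ℝ^N one has ⟨‖a‖^{p−2}a − ‖b‖^{p−2}b, a − b⟩ ≥ 2^{2−p}·‖a−b‖^p. -/
open Real RealInnerProductSpace

/-! Write `x = ‖a‖`, `y = ‖b‖`, `t = ‖a - b‖`. Polarization gives
`2⟪x^(p-2) a - y^(p-2) b, a - b⟫ = (x^(p-2) + y^(p-2)) t² + (x^(p-2) - y^(p-2)) (x² - y²)`,
so the claim becomes a scalar inequality under the triangle constraint `t ≤ x + y`.
After multiplying by `x + y`, the cross term is at least `(x^(p-2) - y^(p-2)) (x - y) t²`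
(both factors have the same sign), which turns the right side into `2 (x^(p-1) + y^(p-1)) t²`.
Convexity of `s ↦ s^(p-1)` gives `x^(p-1) + y^(p-1) ≥ 2^(2-p) (x+y)^(p-1)`, and
`(x+y)^(p-2) ≥ t^(p-2)` finishes. -/

namespace Real

lemma rpow_add_le_mul_rpow_add_rpow {x y : ℝ} (hx : 0 ≤ x) (hy : 0 ≤ y) {q : ℝ} (hq : 1 ≤ q) :
    (x + y) ^ q ≤ 2 ^ (q - 1) * (x ^ q + y ^ q) := by
  lift x to NNReal using hx
  lift y to NNReal using hy
  exact_mod_cast NNReal.rpow_add_le_mul_rpow_add_rpow x y hq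

lemma rpow_sub_rpow_mul_sub_nonneg {x y r : ℝ} (hx : 0 ≤ x) (hy : 0 ≤ y) (hr : 0 ≤ r) :
    0 ≤ (x ^ r - y ^ r) * (x - y) := by
  rcases le_total x y with h | h
  · exact mul_nonneg_of_nonpos_of_nonpos (sub_nonpos.2 (rpow_le_rpow hx h hr)) (sub_nonpos.2 h)
  · exact mul_nonneg (sub_nonneg.2 (rpow_le_rpow hy h hr)) (sub_nonneg.2 h)

end Real

lemma inner_smul_sub_smul_sub_real {E : Type*} [NormedAddCommGroup E] [InnerProductSpace ℝ E]
    (α β : ℝ) (a b : E) :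
    ⟪α • a - β • b, a - b⟫ = ((α + β) * ‖a - b‖ ^ 2 + (α - β) * (‖a‖ ^ 2 - ‖b‖ ^ 2)) / 2 := by
  rw [inner_sub_left, real_inner_smul_left, real_inner_smul_left, inner_sub_right, inner_sub_right,
    real_inner_self_eq_norm_sq, real_inner_self_eq_norm_sq, real_inner_comm a b, norm_sub_sq_real]
  ring

lemma two_rpow_two_sub_mul_rpow_le {x y t p : ℝ} (hx : 0 ≤ x) (hy : 0 ≤ y) (ht : 0 ≤ t)
    (htxy : t ≤ x + y) (hp : 2 ≤ p) :
    2 ^ (2 - p) * t ^ p ≤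
      ((x ^ (p - 2) + y ^ (p - 2)) * t ^ 2 + (x ^ (p - 2) - y ^ (p - 2)) * (x ^ 2 - y ^ 2)) / 2 := by
  rcases (add_nonneg hx hy).eq_or_lt with hs | hs
  · obtain ⟨rfl, rfl, rfl⟩ : x = 0 ∧ y = 0 ∧ t = 0 := ⟨by linarith, by linarith, by linarith⟩
    simp [zero_rpow (by linarith : p ≠ 0)]
  set s := x + y
  have hp₂ : 0 ≤ p - 2 := by linarith
  have hpow_succ : ∀ z : ℝ, 0 ≤ z → z ^ (p - 1) = z ^ (p - 2) * z := fun z hz => by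
    rw [← rpow_add_one' hz (by linarith)]; ring_nf
  have hcross : 2 * (x ^ (p - 1) + y ^ (p - 1)) * t ^ 2 ≤
      s * ((x ^ (p - 2) + y ^ (p - 2)) * t ^ 2 + (x ^ (p - 2) - y ^ (p - 2)) * (x ^ 2 - y ^ 2)) := by
    have hmono := rpow_sub_rpow_mul_sub_nonneg hx hy hp₂
    have ht2 : t ^ 2 ≤ s ^ 2 := pow_le_pow_left₀ ht htxy 2
    rw [hpow_succ x hx, hpow_succ y hy]
    nlinarith [mul_le_mul_of_nonneg_left ht2 hmono]
  have hmean : 2 ^ (2 - p) * s ^ (p - 1) ≤ x ^ (p - 1) + y ^ (p - 1) := by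
    have h := rpow_add_le_mul_rpow_add_rpow hx hy (by linarith : 1 ≤ p - 1)
    calc 2 ^ (2 - p) * s ^ (p - 1)
        ≤ 2 ^ (2 - p) * (2 ^ (p - 1 - 1) * (x ^ (p - 1) + y ^ (p - 1))) := by gcongr
      _ = x ^ (p - 1) + y ^ (p - 1) := by
        rw [← mul_assoc, ← rpow_add two_pos, show 2 - p + (p - 1 - 1) = 0 by ring, rpow_zero,
          one_mul]
  have htp : t ^ p ≤ s ^ (p - 2) * t ^ 2 := by
    rw [show p = (p - 2) + (2 : ℕ) by push_cast; ring, rpow_add' ht (by positivity), rpow_natCast,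
      show p - 2 + (2 : ℕ) - 2 = p - 2 by push_cast; ring]
    gcongr
  refine le_of_mul_le_mul_left ?_ hs
  calc s * (2 ^ (2 - p) * t ^ p)
      ≤ s * (2 ^ (2 - p) * (s ^ (p - 2) * t ^ 2)) := by gcongr
    _ = 2 ^ (2 - p) * s ^ (p - 1) * t ^ 2 := by rw [hpow_succ s hs.le]; ring
    _ ≤ (x ^ (p - 1) + y ^ (p - 1)) * t ^ 2 := by gcongr
    _ ≤ _ := by linarith

/-- Algebraic strong monotonicity inequality for the p-Laplacian, case `p ≥ 2`:
`⟨‖a‖^(p-2) a - ‖b‖^(p-2) b, a - b⟩ ≥ 2^(2-p) ‖a - b‖^p`. -/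
theorem pLaplace_monotone_of_two_le (N : ℕ) (p : ℝ) (hp : 2 ≤ p)
    (a b : EuclideanSpace ℝ (Fin N)) :
    (2 : ℝ) ^ (2 - p) * ‖a - b‖ ^ p ≤
      ⟪‖a‖ ^ (p - 2) • a - ‖b‖ ^ (p - 2) • b, a - b⟫ := by
  rw [inner_smul_sub_smul_sub_real]
  exact two_rpow_two_sub_mul_rpow_le (norm_nonneg a) (norm_nonneg b) (norm_nonneg _)
    (norm_sub_le a b) hp
end

section
/- Let 1 < p < 2. There exists a constant C_p > 0, depending only on p, such that for all vectors a, b ∈ ℝ^N with (a,b) ≠ (0,0) one has ⟨‖a‖^{p−2}a − ‖b‖^{p−2}b, a − b⟩ ≥ C_p·‖a−b‖² / (‖a‖ + ‖b‖)^{2−p}. -/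
open Real RealInnerProductSpace

private lemma scalar_aux {p A B : ℝ} (hp1 : 1 < p) (hp2 : p < 2) (hA : 0 < A) (hB : 0 ≤ B)
    (hBA : B ≤ A) : (p - 1) * (A + B) ^ (p - 2) * (A - B) ≤ A ^ (p - 1) - B ^ (p - 1) := by
  have hA1 : A ^ (p - 1) = A ^ (p - 2) * A := by
    rw [show p - 1 = (p - 2) + 1 by ring, Real.rpow_add_one hA.ne']
  have h1 : (p - 1) * A ^ (p - 2) * (A - B) ≤ A ^ (p - 1) - B ^ (p - 1) := by
    have hs : -1 ≤ B / A - 1 := by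
      have : 0 ≤ B / A := div_nonneg hB hA.le
      linarith
    have hber := rpow_one_add_le_one_add_mul_self hs (by linarith : (0:ℝ) ≤ p - 1)
      (by linarith : p - 1 ≤ 1)
    rw [show 1 + (B / A - 1) = B / A by ring] at hber
    have hApos : (0:ℝ) < A ^ (p - 1) := rpow_pos_of_pos hA _
    have hmul := mul_le_mul_of_nonneg_left hber hApos.le
    have hdiv : A ^ (p - 1) * (B / A) ^ (p - 1) = B ^ (p - 1) := by
      rw [Real.div_rpow hB hA.le, mul_div_cancel₀ _ (rpow_pos_of_pos hA (p-1)).ne']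
    have h3 : A ^ (p - 1) * (B / A) = A ^ (p - 2) * B := by
      rw [hA1]; field_simp
    nlinarith [hmul, hdiv, h3]
  have h2 : (A + B) ^ (p - 2) ≤ A ^ (p - 2) :=
    Real.rpow_le_rpow_of_nonpos hA (by linarith) (by linarith)
  nlinarith [mul_nonneg (mul_nonneg (by linarith : (0:ℝ) ≤ p - 1) (sub_nonneg.2 h2))
    (sub_nonneg.2 hBA)]

private lemma key_pos {p A B t : ℝ} (hp1 : 1 < p) (hp2 : p < 2) (hA : 0 < A) (hB : 0 < B)
    (hBA : B ≤ A) (ht : |t| ≤ A * B) :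
    (p - 1) * (A ^ 2 - 2 * t + B ^ 2) * (A + B) ^ (p - 2) ≤
      A ^ (p - 2) * A ^ 2 + B ^ (p - 2) * B ^ 2 - (A ^ (p - 2) + B ^ (p - 2)) * t := by
  have hA1 : A ^ (p - 1) = A ^ (p - 2) * A := by
    rw [show p - 1 = (p - 2) + 1 by ring, Real.rpow_add_one hA.ne']
  have hB1 : B ^ (p - 1) = B ^ (p - 2) * B := by
    rw [show p - 1 = (p - 2) + 1 by ring, Real.rpow_add_one hB.ne']
  have hKA : (A + B) ^ (p - 2) ≤ A ^ (p - 2) :=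
    Real.rpow_le_rpow_of_nonpos hA (by linarith) (by linarith)
  have hKB : (A + B) ^ (p - 2) ≤ B ^ (p - 2) :=
    Real.rpow_le_rpow_of_nonpos hB (by linarith) (by linarith)
  have hK : (0:ℝ) < (A + B) ^ (p - 2) := rpow_pos_of_pos (by linarith) _
  have hsc := scalar_aux hp1 hp2 hA hB.le hBA
  have hsc2 : (p - 1) * (A + B) ^ (p - 2) * (A - B) * (A - B) ≤
      (A ^ (p - 1) - B ^ (p - 1)) * (A - B) :=
    mul_le_mul_of_nonneg_right hsc (by linarith)
  have hABt : 0 ≤ A * B - t := by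
    have := (abs_le.mp ht).2; linarith
  have hslope : 2 * (p - 1) * (A + B) ^ (p - 2) ≤ A ^ (p - 2) + B ^ (p - 2) := by
    nlinarith
  have hprod := mul_le_mul_of_nonneg_right hslope hABt
  nlinarith [hsc2, hprod, hA1, hB1]

private lemma key_all {p : ℝ} (hp1 : 1 < p) (hp2 : p < 2) {A B t : ℝ} (hA : 0 ≤ A) (hB : 0 ≤ B)
    (hAB : 0 < A + B) (ht : |t| ≤ A * B) :
    (p - 1) * (A ^ 2 - 2 * t + B ^ 2) * (A + B) ^ (p - 2) ≤
      A ^ (p - 2) * A ^ 2 + B ^ (p - 2) * B ^ 2 - (A ^ (p - 2) + B ^ (p - 2)) * t := by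
  rcases eq_or_lt_of_le hA with h0 | hApos
  · have hBpos : 0 < B := by linarith [h0]
    have ht0 : t = 0 := by
      have : |t| ≤ 0 := by rw [← h0] at ht; simpa using ht
      simpa using le_antisymm this (abs_nonneg t)
    rw [← h0, ht0, Real.zero_rpow (by linarith : p - 2 ≠ 0)]
    simp only [zero_add, ne_eq]
    ring_nf
    nlinarith [mul_pos (pow_pos hBpos 2) (rpow_pos_of_pos hBpos (-2 + p))]
  rcases eq_or_lt_of_le hB with h0 | hBpos
  · have ht0 : t = 0 := by
      have : |t| ≤ 0 := by rw [← h0] at ht; simpa using ht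
      simpa using le_antisymm this (abs_nonneg t)
    rw [← h0, ht0, Real.zero_rpow (by linarith : p - 2 ≠ 0)]
    simp only [add_zero, ne_eq]
    ring_nf
    nlinarith [mul_pos (pow_pos hApos 2) (rpow_pos_of_pos hApos (-2 + p))]
  rcases le_total B A with h | h
  · exact key_pos hp1 hp2 hApos hBpos h ht
  · have := key_pos hp1 hp2 hBpos hApos h (by rwa [mul_comm])
    rw [add_comm B A] at this
    nlinarith [this]

/-- Algebraic monotonicity inequality for the p-Laplacian in the singular case `1 < p < 2`:
there is `C_p > 0` with `⟨‖a‖^(p-2) a - ‖b‖^(p-2) b, a - b⟩ ≥ C_p ‖a-b‖² / (‖a‖+‖b‖)^(2-p)`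
for all `(a, b) ≠ (0, 0)` (where `‖a‖^(p-2) a = 0` when `a = 0`, as given by `rpow`). -/
theorem pLaplace_monotone_of_lt_two (N : ℕ) (p : ℝ) (hp1 : 1 < p) (hp2 : p < 2) :
    ∃ C : ℝ, 0 < C ∧ ∀ a b : EuclideanSpace ℝ (Fin N), ¬(a = 0 ∧ b = 0) →
      C * ‖a - b‖ ^ (2 : ℝ) / (‖a‖ + ‖b‖) ^ (2 - p) ≤
        ⟪‖a‖ ^ (p - 2) • a - ‖b‖ ^ (p - 2) • b, a - b⟫ := by
  refine ⟨p - 1, by linarith, fun a b hab => ?_⟩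
  set A := ‖a‖ with hA
  set B := ‖b‖ with hB
  have hA0 : 0 ≤ A := norm_nonneg a
  have hB0 : 0 ≤ B := norm_nonneg b
  have hApB : 0 < A + B := by
    rcases lt_or_eq_of_le (by linarith : (0:ℝ) ≤ A + B) with h | h
    · exact h
    · exact absurd ⟨norm_eq_zero.mp (by linarith), norm_eq_zero.mp (by linarith)⟩ hab
  have hinner : ⟪A ^ (p - 2) • a - B ^ (p - 2) • b, a - b⟫ =
      A ^ (p - 2) * A ^ 2 + B ^ (p - 2) * B ^ 2 - (A ^ (p - 2) + B ^ (p - 2)) * ⟪a, b⟫ := by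
    rw [inner_sub_left, inner_sub_right, inner_sub_right, real_inner_smul_left,
      real_inner_smul_left, real_inner_smul_left, real_inner_smul_left,
      real_inner_self_eq_norm_sq, real_inner_self_eq_norm_sq, real_inner_comm b a]
    ring
  have hnorm : ‖a - b‖ ^ (2:ℝ) = A ^ 2 - 2 * ⟪a, b⟫ + B ^ 2 := by
    rw [Real.rpow_two, @norm_sub_sq_real]
  have hdivpow : ((A + B) ^ (2 - p))⁻¹ = (A + B) ^ (p - 2) := by
    rw [← Real.rpow_neg (by linarith)]
    norm_num
  rw [hinner, hnorm, div_eq_mul_inv, hdivpow]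
  exact key_all hp1 hp2 hA0 hB0 hApB (abs_real_inner_le_norm a b)
end

section
/- Let p > 1, q > p − 1, δ > 1 and T > 0, and set δ₁ = (1/2)·(2q − 2p + 3)^{1/(p−q−1)}·T^{(δ+p−1)/(p−q−1)}. Then for every μ with 0 < μ < δ₁ one has ((q−p+1)/(δ+p−1))·μ^{δ+q} < (1/2)·( (μ/T)^{δ+p−1} − μ^{δ+q} ). -/
open Real

lemma aux_key (a c A X Y : ℝ) (ha : 1 < a) (hc : 0 < c) (hA : 0 < A)
    (hX : 0 < X) (h : (2 * c + 1) * X < Y) :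
    c / a * (A * X) < 1 / 2 * (A * Y - A * X) := by
  have h1 : c / a < c := div_lt_self hc ha
  have h2 : c / a * (A * X) < c * (A * X) :=
    mul_lt_mul_of_pos_right h1 (mul_pos hA hX)
  have h3 : A * ((2 * c + 1) * X) < A * Y := mul_lt_mul_of_pos_left h hA
  nlinarith

/-- For `δ > 1` and `0 < μ < δ₁ = (1/2)(2q-2p+3)^(1/(p-q-1)) T^((δ+p-1)/(p-q-1))`, one has
`((q-p+1)/(δ+p-1)) μ^(δ+q) < (1/2)((μ/T)^(δ+p-1) - μ^(δ+q))`. -/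
theorem aux_inequality (p q δ T : ℝ) (hp : 1 < p) (hq : p - 1 < q)
    (hδ : 1 < δ) (hT : 0 < T)
    (δ₁ : ℝ)
    (hδ₁ : δ₁ = (1 / 2) * (2 * q - 2 * p + 3) ^ (1 / (p - q - 1)) *
      T ^ ((δ + p - 1) / (p - q - 1))) :
    ∀ μ : ℝ, 0 < μ → μ < δ₁ →
      (q - p + 1) / (δ + p - 1) * μ ^ (δ + q) <
        (1 / 2) * ((μ / T) ^ (δ + p - 1) - μ ^ (δ + q)) := by
  intro μ hμ hμδ
  have hc0 : 0 < q - p + 1 := by linarith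
  have hpq : p - q - 1 < 0 := by linarith
  have hne : p - q - 1 ≠ 0 := ne_of_lt hpq
  have ha1 : 1 < δ + p - 1 := by linarith
  have hM0 : (0:ℝ) < 2 * q - 2 * p + 3 := by linarith
  have hTa : 0 < T ^ (δ + p - 1) := rpow_pos_of_pos hT _
  have hXpos : 0 < μ ^ (q - p + 1) := rpow_pos_of_pos hμ _
  have hApos : 0 < μ ^ (δ + p - 1) := rpow_pos_of_pos hμ _
  -- μ^c < δ₁^c
  have h1 : μ ^ (q - p + 1) < δ₁ ^ (q - p + 1) :=
    Real.rpow_lt_rpow hμ.le hμδ hc0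
  -- compute δ₁^c bound
  have h2 : δ₁ ^ (q - p + 1) ≤ (2 * q - 2 * p + 3)⁻¹ * (T ^ (δ + p - 1))⁻¹ := by
    have e1 : (1 / (p - q - 1)) * (q - p + 1) = -1 := by field_simp; ring
    have e2 : ((δ + p - 1) / (p - q - 1)) * (q - p + 1) = -(δ + p - 1) := by
      field_simp; ring
    rw [hδ₁, Real.mul_rpow (by positivity) (by positivity),
      Real.mul_rpow (by positivity) (by positivity),
      ← Real.rpow_mul hM0.le, ← Real.rpow_mul hT.le, e1, e2,
      Real.rpow_neg_one, Real.rpow_neg hT.le]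
    have hhalf : ((1:ℝ) / 2) ^ (q - p + 1) ≤ 1 :=
      Real.rpow_le_one (by norm_num) (by norm_num) hc0.le
    have hpos : 0 < (2 * q - 2 * p + 3)⁻¹ * (T ^ (δ + p - 1))⁻¹ := by positivity
    nlinarith
  -- key inequality
  have hkey : (2 * (q - p + 1) + 1) * μ ^ (q - p + 1) < (T ^ (δ + p - 1))⁻¹ := by
    have h3 : μ ^ (q - p + 1) < (2 * q - 2 * p + 3)⁻¹ * (T ^ (δ + p - 1))⁻¹ :=
      lt_of_lt_of_le h1 h2
    have hMinv : 0 < (2 * q - 2 * p + 3)⁻¹ := by positivity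
    have : (2 * q - 2 * p + 3) * μ ^ (q - p + 1) <
        (2 * q - 2 * p + 3) * ((2 * q - 2 * p + 3)⁻¹ * (T ^ (δ + p - 1))⁻¹) :=
      mul_lt_mul_of_pos_left h3 hM0
    rw [← mul_assoc, mul_inv_cancel₀ (ne_of_gt hM0), one_mul] at this
    linarith
  -- rewrite the goal
  have hb : δ + q = (δ + p - 1) + (q - p + 1) := by ring
  rw [hb, Real.rpow_add hμ, Real.div_rpow hμ.le hT.le, div_eq_mul_inv]
  exact aux_key (δ + p - 1) (q - p + 1) (μ ^ (δ + p - 1)) (μ ^ (q - p + 1))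
    (T ^ (δ + p - 1))⁻¹ ha1 hc0 hApos hXpos hkey
end

section
/- Let p > 1, δ > 0, c > 0, and let q satisfy q > p − 1 and q ≥ 1. For λ > 0 let M(λ) denote the unique positive solution of λ·(p + δ − 1)·M + (p − 1)·c = (q − p + 1)·M^q·(M + c)^{1+δ}. Then M is strictly increasing in λ: if 0 < λ < λ′ then M(λ) < M(λ′). -/
open Real

/-- The threshold `M(λ)`, defined as the unique positive solution of
`λ(p+δ-1)M + (p-1)c = (q-p+1) M^q (M+c)^(1+δ)`, is strictly increasing in `λ`. -/
theorem threshold_strict_mono (p q δ c : ℝ) (hp : 1 < p) (hδ : 0 < δ) (hc : 0 < c)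
    (hq1 : p - 1 < q) (hq2 : 1 ≤ q) (M : ℝ → ℝ)
    (hM : ∀ lam : ℝ, 0 < lam → 0 < M lam ∧
      lam * (p + δ - 1) * M lam + (p - 1) * c =
        (q - p + 1) * (M lam) ^ q * (M lam + c) ^ (1 + δ)) :
    ∀ lam lam' : ℝ, 0 < lam → lam < lam' → M lam < M lam' := by
  intro lam lam' hlam hlt
  by_contra hcon
  push_neg at hcon
  obtain ⟨hm, he⟩ := hM lam hlam
  obtain ⟨hm', he'⟩ := hM lam' (hlam.trans hlt)
  set m := M lam with hmdef
  set m' := M lam' with hm'def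
  have hP : 0 < p + δ - 1 := by linarith
  have hq0 : 0 ≤ q - 1 := by linarith
  -- powers comparison
  have h1 : m' ^ (q - 1) ≤ m ^ (q - 1) := Real.rpow_le_rpow hm'.le hcon hq0
  have e1 : m' ^ q = m' ^ (q - 1) * m' := by
    calc m' ^ q = m' ^ (q - 1 + 1) := by congr 1; ring
    _ = m' ^ (q - 1) * m' ^ (1 : ℝ) := Real.rpow_add hm' _ _
    _ = m' ^ (q - 1) * m' := by rw [Real.rpow_one]
  have e2 : m ^ q = m ^ (q - 1) * m := by
    calc m ^ q = m ^ (q - 1 + 1) := by congr 1; ring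
    _ = m ^ (q - 1) * m ^ (1 : ℝ) := Real.rpow_add hm _ _
    _ = m ^ (q - 1) * m := by rw [Real.rpow_one]
  have hp1 : 0 < m' ^ (q - 1) := Real.rpow_pos_of_pos hm' _
  have hp2 : 0 < m ^ (q - 1) := Real.rpow_pos_of_pos hm _
  have key : m' ^ q * m ≤ m ^ q * m' := by
    rw [e1, e2]
    nlinarith [mul_pos hm hm']
  have h2 : (m' + c) ^ (1 + δ) ≤ (m + c) ^ (1 + δ) :=
    Real.rpow_le_rpow (by linarith) (by linarith) (by linarith)
  have hy : 0 < (m' + c) ^ (1 + δ) := Real.rpow_pos_of_pos (by linarith) _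
  have hqpos : 0 < m' ^ q := Real.rpow_pos_of_pos hm' _
  have hmqpos : 0 < m ^ q := Real.rpow_pos_of_pos hm _
  have ineq : (q - p + 1) * (m' ^ q) * ((m' + c) ^ (1 + δ)) * m ≤
      (q - p + 1) * (m ^ q) * ((m + c) ^ (1 + δ)) * m' := by
    have hb : m' ^ q * m * ((m' + c) ^ (1 + δ)) ≤ m ^ q * m' * ((m + c) ^ (1 + δ)) :=
      mul_le_mul key h2 hy.le (by positivity)
    nlinarith [hb]
  have L' : (lam' * (p + δ - 1) * m' + (p - 1) * c) * m =
      (q - p + 1) * m' ^ q * (m' + c) ^ (1 + δ) * m := by rw [he']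
  have L : (lam * (p + δ - 1) * m + (p - 1) * c) * m' =
      (q - p + 1) * m ^ q * (m + c) ^ (1 + δ) * m' := by rw [he]
  have hA : 0 < (lam' - lam) * (p + δ - 1) * m * m' :=
    mul_pos (mul_pos (mul_pos (sub_pos.mpr hlt) hP) hm) hm'
  have hB : 0 ≤ (p - 1) * c * (m - m') :=
    mul_nonneg (mul_nonneg (by linarith) hc.le) (by linarith)
  nlinarith [hA, hB, L, L', ineq]
end
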